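/- arXiv:2409.16579 — 11 statements merged into one kernel-verified Lean document; each statement's English description precedes it below -/
import Mathlib

section
/- Consider the two-agent symmetric FOHGS (or EOHGS) with agents 1 and 2 who are mutual strangers. Then neither of the two partitions {{1},{2}} and {{1,2}} is necessarily contractually individually stable: for each partition there exists a resolution of the stranger relation under which the partition fails contractual individual stability. Hence necessarily CIS partitions need not exist for symmetric FOHGS/EOHGS. -/
open Finset

/-- A hedonic game with strangers: each agent classifies others as
friends, enemies, or strangers. -/
structure HGS (α : Type*) [DecidableEq α] where
  F : α → Finset α
  E : α → Finset α
  S : α → Finset α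

variable {α : Type*} [Fintype α] [DecidableEq α]

/-- The friend/enemy/stranger sets of each agent partition `N \ {i}`. -/
def HGS.IsValid (G : HGS α) : Prop :=
  ∀ i j, ((j ∈ G.F i ∨ j ∈ G.E i ∨ j ∈ G.S i) ↔ j ≠ i) ∧
    ¬(j ∈ G.F i ∧ j ∈ G.E i) ∧ ¬(j ∈ G.F i ∧ j ∈ G.S i) ∧ ¬(j ∈ G.E i ∧ j ∈ G.S i)

/-- Utility of agent `i` in coalition `C` under resolution `r`
(`r i j = true` means the stranger pair `(i,j)` becomes friendship),
with friend weight `wp` and enemy weight `wm`. -/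
def HGS.util (G : HGS α) (wp wm : ℤ) (r : α → α → Bool) (i : α) (C : Finset α) : ℤ :=
  wp * (((G.F i ∩ C).card : ℤ) + (((G.S i ∩ C).filter (fun j => r i j = true)).card : ℤ))
    - wm * (((G.E i ∩ C).card : ℤ) + (((G.S i ∩ C).filter (fun j => r i j = false)).card : ℤ))

/-- A partition given as the map sending each agent to its coalition. -/
def IsPartition (P : α → Finset α) : Prop :=
  (∀ i, i ∈ P i) ∧ ∀ i j, j ∈ P i → P j = P i

/-- Coalition `C` blocks partition `P` under resolution `r`. -/
def Blocks (G : HGS α) (wp wm : ℤ) (r : α → α → Bool) (P : α → Finset α) (C : Finset α) : Prop :=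
  ∀ a ∈ C, G.util wp wm r a C > G.util wp wm r a (P a)

/-- Core stability under a resolution. -/
def CoreStable (G : HGS α) (wp wm : ℤ) (r : α → α → Bool) (P : α → Finset α) : Prop :=
  ¬ ∃ C : Finset α, C.Nonempty ∧ Blocks G wp wm r P C

/-- Nash stability under a resolution. -/
def NashStable (G : HGS α) (wp wm : ℤ) (r : α → α → Bool) (P : α → Finset α) : Prop :=
  ¬ ∃ (i : α) (C : Finset α), (C = ∅ ∨ ∃ j, C = P j) ∧ i ∉ C ∧
    G.util wp wm r i (insert i C) > G.util wp wm r i (P i)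

/-- Individual stability under a resolution. -/
def IndivStable (G : HGS α) (wp wm : ℤ) (r : α → α → Bool) (P : α → Finset α) : Prop :=
  ¬ ∃ (i : α) (C : Finset α), (C = ∅ ∨ ∃ j, C = P j) ∧ i ∉ C ∧
    G.util wp wm r i (insert i C) > G.util wp wm r i (P i) ∧
    (∀ j ∈ C, G.util wp wm r j (insert i C) ≥ G.util wp wm r j C)

/-- Contractual individual stability under a resolution. -/
def CIS (G : HGS α) (wp wm : ℤ) (r : α → α → Bool) (P : α → Finset α) : Prop :=
  ¬ ∃ (i : α) (C : Finset α), (C = ∅ ∨ ∃ j, C = P j) ∧ i ∉ C ∧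
    G.util wp wm r i (insert i C) > G.util wp wm r i (P i) ∧
    (∀ j ∈ C, G.util wp wm r j (insert i C) ≥ G.util wp wm r j C) ∧
    (∀ k ∈ P i, k ≠ i → G.util wp wm r k (P i \ {i}) ≥ G.util wp wm r k (P i))

/-- The two-agent game where the two agents are mutual strangers. -/
def twoStrangers : HGS (Fin 2) where
  F := fun _ => ∅
  E := fun _ => ∅
  S := fun i => Finset.univ \ {i}

/-- In the two-agent FOHGS/EOHGS with mutual strangers, neither the singleton
partition `{{1},{2}}` nor the grand coalition `{{1,2}}` is necessarily CIS. -/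
theorem two_strangers_no_necessarily_CIS (wp wm : ℤ)
    (hw : (wp = 2 ∧ wm = 1) ∨ (wp = 1 ∧ wm = 2)) :
    (¬ ∀ r : Fin 2 → Fin 2 → Bool, CIS twoStrangers wp wm r (fun i => {i})) ∧
    (¬ ∀ r : Fin 2 → Fin 2 → Bool, CIS twoStrangers wp wm r (fun _ => Finset.univ)) := by
  obtain ⟨h1, h2⟩ | ⟨h1, h2⟩ := hw <;> subst h1 <;> subst h2 <;>
    refine ⟨fun h => h (fun _ _ => true) ⟨0, {1}, Or.inr ⟨1, rfl⟩, by decide, by decide, by decide, by decide⟩,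
      fun h => h (fun _ _ => false) ⟨0, ∅, Or.inl rfl, by decide, by decide, by decide, by decide⟩⟩
end

section
/- Consider the symmetric EOHGS with agents {1,2,3}, symmetric friendship edges (1,2) and (1,3), stranger edge (2,3), and no enemy edges. Then none of the five partitions of {1,2,3} is necessarily individually stable: for each partition there exists a resolution of the stranger edge (2,3) into friendship or enmity, an agent i, and a coalition C ∈ γ ∪ {∅} with i ∉ C such that i strictly prefers C ∪ {i} to γ(i) and all members of C weakly prefer C ∪ {i} to C. -/
open Finset

variable {α : Type*} [Fintype α] [DecidableEq α]

/-- The three-agent symmetric EOHGS with friendship edges (1,2),(1,3),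
stranger edge (2,3), and no enemies (agents renamed 0,1,2). -/
def threeGame : HGS (Fin 3) where
  F := fun i => if i = 0 then {1, 2} else {0}
  E := fun _ => ∅
  S := fun i => if i = 0 then ∅ else if i = 1 then {2} else {1}

/-- In the three-agent EOHGS above, no partition is necessarily individually stable. -/
theorem three_game_no_necessarily_IS (P : Fin 3 → Finset (Fin 3)) (hP : IsPartition P) :
    ¬ ∀ r : Fin 3 → Fin 3 → Bool, IndivStable threeGame 1 3 r P := by
  obtain ⟨hmem, hco⟩ := hP
  intro h
  by_cases h1 : (1 : Fin 3) ∈ P 0 <;> by_cases h2 : (2 : Fin 3) ∈ P 0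
  · -- grand coalition
    have e0 : P 0 = {0, 1, 2} := by
      ext x; fin_cases x <;> simp [hmem 0, h1, h2]
    exact h (fun _ _ => false) ⟨1, ∅, Or.inl rfl, by decide,
      by rw [hco 0 1 h1, e0]; decide, by simp⟩
  · -- {0,1}, {2}
    have e0 : P 0 = {0, 1} := by
      ext x; fin_cases x <;> simp [hmem 0, h1, h2]
    have n0 : (0 : Fin 3) ∉ P 2 := by
      intro hx; exact h2 (by rw [hco 2 0 hx]; exact hmem 2)
    have n1 : (1 : Fin 3) ∉ P 2 := by
      intro hx
      have e : P 2 = P 0 := (hco 2 1 hx).symm.trans (hco 0 1 h1)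
      exact h2 (by rw [← e]; exact hmem 2)
    have e2 : P 2 = {2} := by
      ext x; fin_cases x <;> simp [hmem 2, n0, n1]
    exact h (fun _ _ => true) ⟨2, P 0, Or.inr ⟨0, rfl⟩, by rw [e0]; decide,
      by rw [e0, e2]; decide, by rw [e0]; decide⟩
  · -- {0,2}, {1}
    have e0 : P 0 = {0, 2} := by
      ext x; fin_cases x <;> simp [hmem 0, h1, h2]
    have n0 : (0 : Fin 3) ∉ P 1 := by
      intro hx; exact h1 (by rw [hco 1 0 hx]; exact hmem 1)
    have n2 : (2 : Fin 3) ∉ P 1 := by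
      intro hx
      have e : P 1 = P 0 := (hco 1 2 hx).symm.trans (hco 0 2 h2)
      exact h1 (by rw [← e]; exact hmem 1)
    have e1 : P 1 = {1} := by
      ext x; fin_cases x <;> simp [hmem 1, n0, n2]
    exact h (fun _ _ => true) ⟨1, P 0, Or.inr ⟨0, rfl⟩, by rw [e0]; decide,
      by rw [e0, e1]; decide, by rw [e0]; decide⟩
  · by_cases h3 : (2 : Fin 3) ∈ P 1
    · -- {0}, {1,2}
      have e0 : P 0 = {0} := by
        ext x; fin_cases x <;> simp [hmem 0, h1, h2]
      have n0 : (0 : Fin 3) ∉ P 1 := by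
        intro hx; exact h1 (by rw [hco 1 0 hx]; exact hmem 1)
      have e1 : P 1 = {1, 2} := by
        ext x; fin_cases x <;> simp [hmem 1, n0, h3]
      exact h (fun _ _ => true) ⟨0, P 1, Or.inr ⟨1, rfl⟩, by rw [e1]; decide,
        by rw [e0, e1]; decide, by rw [e1]; decide⟩
    · -- singletons
      have e0 : P 0 = {0} := by
        ext x; fin_cases x <;> simp [hmem 0, h1, h2]
      have n0 : (0 : Fin 3) ∉ P 1 := by
        intro hx; exact h1 (by rw [hco 1 0 hx]; exact hmem 1)
      have e1 : P 1 = {1} := by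
        ext x; fin_cases x <;> simp [hmem 1, n0, h3]
      exact h (fun _ _ => true) ⟨1, P 0, Or.inr ⟨0, rfl⟩, by rw [e0]; decide,
        by rw [e0, e1]; decide, by rw [e0]; decide⟩
end

section
/- Consider the symmetric FOHGS (or EOHGS) with five agents {1,2,3,4,5}, symmetric friendship edges (1,2) and (4,5), symmetric stranger edges (2,3) and (3,4), and all other pairs enemies. The partition {{1,2},{3},{4,5}} is necessarily contractually individually stable. Consequently, the condition that every agent be viewed as a friend by someone is not necessary for the existence of a necessarily CIS partition. -/
open Finset

variable {α : Type*} [Fintype α] [DecidableEq α]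

/-- Known friends in the five-agent example (agents renamed 0..4):
friendship edges (0,1) and (3,4). -/
def fiveF : Fin 5 → Finset (Fin 5) := fun i =>
  if i = 0 then {1} else if i = 1 then {0} else if i = 3 then {4} else if i = 4 then {3} else ∅

/-- Stranger edges (1,2) and (2,3). -/
def fiveS : Fin 5 → Finset (Fin 5) := fun i =>
  if i = 1 then {2} else if i = 2 then {1, 3} else if i = 3 then {2} else ∅

/-- The five-agent symmetric game: all remaining pairs are enemies. -/
def fiveGame : HGS (Fin 5) where
  F := fiveF
  E := fun i => Finset.univ \ insert i (fiveF i ∪ fiveS i)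
  S := fiveS

/-- The partition {{0,1},{2},{3,4}}. -/
def fivePart : Fin 5 → Finset (Fin 5) := fun i =>
  if i = 2 then {2} else if i = 0 ∨ i = 1 then {0, 1} else {3, 4}


/-- Utility only depends on `r` at stranger pairs. -/
lemma util_congr (G : HGS α) (wp wm : ℤ) (r r' : α → α → Bool) (i : α)
    (h : ∀ j ∈ G.S i, r i j = r' i j) (C : Finset α) :
    G.util wp wm r i C = G.util wp wm r' i C := by
  have h1 : (G.S i ∩ C).filter (fun j => r i j = true)
      = (G.S i ∩ C).filter (fun j => r' i j = true) := by
    apply Finset.filter_congr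
    intro j hj
    rw [h j (Finset.mem_inter.mp hj).1]
  have h2 : (G.S i ∩ C).filter (fun j => r i j = false)
      = (G.S i ∩ C).filter (fun j => r' i j = false) := by
    apply Finset.filter_congr
    intro j hj
    rw [h j (Finset.mem_inter.mp hj).1]
  unfold HGS.util
  rw [h1, h2]

lemma CIS_congr (G : HGS α) (wp wm : ℤ) (r r' : α → α → Bool) (P : α → Finset α)
    (h : ∀ i, ∀ j ∈ G.S i, r i j = r' i j)
    (h' : CIS G wp wm r' P) : CIS G wp wm r P := by
  intro ⟨i, C, h1, h2, h3, h4, h5⟩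
  refine h' ⟨i, C, h1, h2, ?_, ?_, ?_⟩
  · rw [← util_congr G wp wm r r' i (h i), ← util_congr G wp wm r r' i (h i)]; exact h3
  · intro j hj
    rw [← util_congr G wp wm r r' j (h j), ← util_congr G wp wm r r' j (h j)]; exact h4 j hj
  · intro k hk hki
    rw [← util_congr G wp wm r r' k (h k), ← util_congr G wp wm r r' k (h k)]; exact h5 k hk hki

/-- A canonical resolution determined by the four stranger directions. -/
def rOf (a b c d : Bool) : Fin 5 → Fin 5 → Bool := fun i j =>
  if i = 1 ∧ j = 2 then a else if i = 2 ∧ j = 1 then b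
  else if i = 2 ∧ j = 3 then c else if i = 3 ∧ j = 2 then d else false

lemma rOf_CIS (wp wm : ℤ) (hw : (wp = 5 ∧ wm = 1) ∨ (wp = 1 ∧ wm = 5))
    (a b c d : Bool) : CIS fiveGame wp wm (rOf a b c d) fivePart := by
  rcases hw with ⟨h1, h2⟩ | ⟨h1, h2⟩ <;> subst h1 <;> subst h2 <;>
    cases a <;> cases b <;> cases c <;> cases d <;> unfold CIS <;> decide

/-- In the five-agent game, agent 2 is nobody's known friend, yet the partition
{{0,1},{2},{3,4}} is necessarily CIS (for both the FOHGS weights (5,1) and the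
EOHGS weights (1,5)): the everyone-has-a-friend condition is not necessary. -/
theorem five_game_necessarily_CIS (wp wm : ℤ)
    (hw : (wp = 5 ∧ wm = 1) ∨ (wp = 1 ∧ wm = 5)) :
    (∃ i : Fin 5, ∀ k : Fin 5, i ∉ fiveGame.F k) ∧
    (∀ r : Fin 5 → Fin 5 → Bool, CIS fiveGame wp wm r fivePart) := by
  constructor
  · exact ⟨2, by decide⟩
  · intro r
    apply CIS_congr fiveGame wp wm r (rOf (r 1 2) (r 2 1) (r 2 3) (r 3 2)) fivePart
    · intro i j hj
      fin_cases i <;> fin_cases j <;> simp_all [fiveGame, fiveS, rOf] <;> rfl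
    · exact rOf_CIS wp wm hw _ _ _ _
end

section
/- In a FOHGS, any partition γ whose coalitions are exactly the connected components of the (known) friendship graph is necessarily internally stable: for every resolution of stranger relations, no coalition C ∈ γ contains a proper nonempty subset D ⊂ C such that every agent in D strictly prefers D to C. -/
open Finset

variable {α : Type*} [Fintype α] [DecidableEq α]

/-- The (known, mutual) friendship graph of a game. -/
def friendGraph (G : HGS α) : SimpleGraph α where
  Adj i j := i ≠ j ∧ j ∈ G.F i ∧ i ∈ G.F j
  symm := ⟨fun i j h => ⟨h.1.symm, h.2.2, h.2.1⟩⟩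
  loopless := ⟨fun i h => h.1 rfl⟩


lemma walk_crossing {G' : SimpleGraph α} {D : Finset α} :
    ∀ {a b : α}, G'.Walk a b → a ∈ D → b ∉ D →
    ∃ x y, G'.Adj x y ∧ x ∈ D ∧ y ∉ D := by
  intro a b w
  induction w with
  | nil => intro h h'; exact absurd h h'
  | @cons a c b h p ih =>
    intro ha hb
    by_cases hc : c ∈ D
    · exact ih hc hb
    · exact ⟨a, c, h, ha, hc⟩

/-- In a FOHGS, a partition into the connected components of the friendship graph
is necessarily internally stable: under every resolution no coalition has a proper
nonempty subset all of whose members strictly prefer the subset. -/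
theorem fohgs_components_necessarily_internally_stable (G : HGS α) (hG : G.IsValid)
    (P : α → Finset α) (hP : IsPartition P)
    (hcomp : ∀ i j : α, j ∈ P i ↔ (friendGraph G).Reachable i j) :
    ∀ r : α → α → Bool, ¬ ∃ (i : α) (D : Finset α), D.Nonempty ∧ D ⊂ P i ∧
      ∀ j ∈ D, G.util (Fintype.card α) 1 r j D > G.util (Fintype.card α) 1 r j (P i) := by
  intro r
  rintro ⟨i, D, ⟨a, ha⟩, hDsub, hblock⟩
  obtain ⟨hsub, hne⟩ := Finset.ssubset_iff_subset_ne.mp hDsub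
  -- find b ∈ P i \\ D
  obtain ⟨b, hbP, hbD⟩ : ∃ b, b ∈ P i ∧ b ∉ D := by
    by_contra h
    push_neg at h
    exact hne (Finset.Subset.antisymm hsub h)
  -- reachability from a to b
  have haP : a ∈ P i := hsub ha
  have hab : (friendGraph G).Reachable a b :=
    ((hcomp i a).mp haP).symm.trans ((hcomp i b).mp hbP)
  obtain ⟨w⟩ := hab
  obtain ⟨x, y, hadj, hxD, hyD⟩ := walk_crossing w ha hbD
  have hxP : x ∈ P i := hsub hxD
  have hyP : y ∈ P i := (hcomp i y).mpr (((hcomp i x).mp hxP).trans hadj.reachable)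
  have hyF : y ∈ G.F x := (show x ≠ y ∧ y ∈ G.F x ∧ x ∈ G.F y from hadj).2.1
  set n : ℤ := (Fintype.card α : ℤ) with hn
  -- abbreviations
  set FD := (G.F x ∩ D).card with hFD
  set SD := ((G.S x ∩ D).filter (fun j => r x j = true)).card with hSD
  set FC := (G.F x ∩ P i).card with hFC
  set SC := ((G.S x ∩ P i).filter (fun j => r x j = true)).card with hSC
  set EC := (G.E x ∩ P i).card with hEC
  set TC := ((G.S x ∩ P i).filter (fun j => r x j = false)).card with hTC
  have h1 : FD + 1 ≤ FC := by
    have hsub1 : G.F x ∩ D ⊆ (G.F x ∩ P i).erase y := by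
      intro z hz
      simp only [Finset.mem_erase, Finset.mem_inter] at hz ⊢
      obtain ⟨hz1, hz2⟩ := hz
      exact ⟨fun h => hyD (h ▸ hz2), hz1, hsub hz2⟩
    have hA := Finset.card_le_card hsub1
    have hy' : y ∈ G.F x ∩ P i := Finset.mem_inter.mpr ⟨hyF, hyP⟩
    have hB := Finset.card_erase_of_mem hy'
    have hy0 : 0 < (G.F x ∩ P i).card := Finset.card_pos.mpr ⟨y, hy'⟩
    omega
  have h2 : SD ≤ SC := by
    apply Finset.card_le_card
    exact Finset.filter_subset_filter _ (Finset.inter_subset_inter le_rfl hsub)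
  have h3 : EC + TC ≤ Fintype.card α - 1 ∧ 1 ≤ Fintype.card α := by
    have hdisj : Disjoint (G.E x ∩ P i)
        ((G.S x ∩ P i).filter (fun j => r x j = false)) := by
      rw [Finset.disjoint_left]
      intro z hz1 hz2
      simp only [Finset.mem_inter, Finset.mem_filter] at hz1 hz2
      exact (hG x z).2.2.2 ⟨hz1.1, hz2.1.1⟩
    have hsub2 : (G.E x ∩ P i) ∪ ((G.S x ∩ P i).filter (fun j => r x j = false))
        ⊆ Finset.univ.erase x := by
      intro z hz
      simp only [Finset.mem_union, Finset.mem_inter, Finset.mem_filter] at hz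
      have hzne : z ≠ x := by
        rcases hz with h | h
        · exact (hG x z).1.mp (Or.inr (Or.inl h.1))
        · exact (hG x z).1.mp (Or.inr (Or.inr h.1.1))
      simp [hzne]
    have hcard := Finset.card_le_card hsub2
    rw [Finset.card_union_of_disjoint hdisj] at hcard
    have h4 : x ∈ Finset.univ (α := α) := Finset.mem_univ x
    have h5 : Finset.univ.card = Fintype.card α := rfl
    have h6 := Finset.card_erase_of_mem h4
    constructor
    · omega
    · exact Fintype.card_pos_iff.mpr ⟨x⟩
  have hx := hblock x hxD
  rw [HGS.util, HGS.util] at hx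
  simp only [← hFD, ← hSD, ← hFC, ← hSC, ← hEC, ← hTC, ← hn] at hx
  have hDpos : (0:ℤ) ≤ (G.E x ∩ D).card + ((G.S x ∩ D).filter (fun j => r x j = false)).card := by
    positivity
  obtain ⟨h3a, h3b⟩ := h3
  have hnge : (1:ℤ) ≤ n := by rw [hn]; exact_mod_cast h3b
  have h3a' : (EC:ℤ) + TC ≤ n - 1 := by
    have : ((EC + TC : ℕ) : ℤ) ≤ ((Fintype.card α - 1 : ℕ) : ℤ) := by exact_mod_cast h3a
    push_cast [Nat.cast_sub h3b] at this
    omega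
  have h1' : (FD:ℤ) + 1 ≤ FC := by exact_mod_cast h1
  have h2' : (SD:ℤ) ≤ SC := by exact_mod_cast h2
  nlinarith [hx, hDpos, h1', h2', h3a', hnge]
end

section
/- Let G be a FOHGS or EOHGS, let γ be a partition, and let r' be the resolution in which each stranger pair (i,j) becomes friendship if γ(i) = γ(j) and enmity otherwise. Suppose a coalition C blocks γ under r' (every i ∈ C strictly prefers C to γ(i) under r'). Then C blocks γ under the resolution r'' obtained from r' by flipping a single stranger edge (i,j) with γ(i) = γ(j) from friendship to enmity. -/
open Finset

variable {α : Type*} [Fintype α] [DecidableEq α]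

private lemma util_eq_aux (G : HGS α) (wp wm : ℤ) (r : α → α → Bool) (a : α) (D : Finset α) :
    G.util wp wm r a D = wp * ((G.F a ∩ D).card : ℤ) - wm * ((G.E a ∩ D).card : ℤ)
      - wm * ((G.S a ∩ D).card : ℤ)
      + (wp + wm) * ∑ b ∈ G.S a ∩ D, (if r a b = true then (1 : ℤ) else 0) := by
  unfold HGS.util
  rw [Finset.card_filter, Finset.card_filter]
  push_cast
  have h : ∀ b ∈ G.S a ∩ D, (if r a b = false then (1:ℤ) else 0)
      = 1 - (if r a b = true then 1 else 0) := by
    intro b _; cases r a b <;> simp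
  rw [Finset.sum_congr rfl h, Finset.sum_sub_distrib, Finset.sum_const, nsmul_eq_mul, mul_one]
  ring

/-- If `C` blocks `γ` under the resolution `r'` (strangers become friends iff they
share a coalition), then `C` still blocks `γ` after flipping a single within-coalition
stranger edge `(i,j)` from friendship to enmity. -/
theorem blocking_preserved_by_single_flip (G : HGS α) (hG : G.IsValid) (wp wm : ℤ)
    (hw : (wp = Fintype.card α ∧ wm = 1) ∨ (wp = 1 ∧ wm = Fintype.card α))
    (P : α → Finset α) (hP : IsPartition P) (C : Finset α) (i j : α)
    (hij : j ∈ G.S i) (hji : i ∈ G.S j) (hPij : P i = P j)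
    (hblock : Blocks G wp wm (fun a b => decide (P a = P b)) P C) :
    Blocks G wp wm
      (fun a b => if (a = i ∧ b = j) ∨ (a = j ∧ b = i) then false else decide (P a = P b))
      P C := by
  set r' : α → α → Bool := fun a b => decide (P a = P b) with hr'
  set r'' : α → α → Bool :=
    fun a b => if (a = i ∧ b = j) ∨ (a = j ∧ b = i) then false else decide (P a = P b) with hr''
  have hne : i ≠ j := by
    intro h; exact ((hG i j).1.mp (Or.inr (Or.inr hij))) h.symm
  have hwpos : 0 ≤ wp + wm := by
    rcases hw with ⟨h1, h2⟩ | ⟨h1, h2⟩ <;> subst h1 <;> subst h2 <;> positivity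
  -- utility change for agent i
  have keyi : ∀ D : Finset α, G.util wp wm r'' i D
      = G.util wp wm r' i D - (if j ∈ D then (wp + wm) else 0) := by
    intro D
    rw [util_eq_aux, util_eq_aux]
    have hsum : ∑ b ∈ G.S i ∩ D, (if r'' i b = true then (1:ℤ) else 0)
        = (∑ b ∈ G.S i ∩ D, (if r' i b = true then (1:ℤ) else 0))
          - (if j ∈ G.S i ∩ D then (1:ℤ) else 0) := by
      rw [eq_sub_iff_add_eq, ← Finset.sum_ite_eq' (G.S i ∩ D) j (fun _ => (1:ℤ)),
        ← Finset.sum_add_distrib]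
      refine Finset.sum_congr rfl fun b _ => ?_
      by_cases hbj : b = j
      · subst hbj
        simp [hr', hr'', hne.symm, hPij]
      · simp [hr', hr'', hbj, fun h : i = j => hne h]
    rw [hsum]
    have : (if j ∈ G.S i ∩ D then (1:ℤ) else 0) = (if j ∈ D then (1:ℤ) else 0) := by
      simp [Finset.mem_inter, hij]
    rw [this]
    by_cases hjD : j ∈ D <;> simp [hjD] <;> ring
  -- utility change for agent j
  have keyj : ∀ D : Finset α, G.util wp wm r'' j D
      = G.util wp wm r' j D - (if i ∈ D then (wp + wm) else 0) := by
    intro D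
    rw [util_eq_aux, util_eq_aux]
    have hsum : ∑ b ∈ G.S j ∩ D, (if r'' j b = true then (1:ℤ) else 0)
        = (∑ b ∈ G.S j ∩ D, (if r' j b = true then (1:ℤ) else 0))
          - (if i ∈ G.S j ∩ D then (1:ℤ) else 0) := by
      rw [eq_sub_iff_add_eq, ← Finset.sum_ite_eq' (G.S j ∩ D) i (fun _ => (1:ℤ)),
        ← Finset.sum_add_distrib]
      refine Finset.sum_congr rfl fun b _ => ?_
      by_cases hbi : b = i
      · subst hbi
        simp [hr', hr'', hne, hPij.symm]
      · simp [hr', hr'', hbi, hne.symm]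
    rw [hsum]
    have : (if i ∈ G.S j ∩ D then (1:ℤ) else 0) = (if i ∈ D then (1:ℤ) else 0) := by
      simp [Finset.mem_inter, hji]
    rw [this]
    by_cases hiD : i ∈ D <;> simp [hiD] <;> ring
  -- no change for other agents
  have keyo : ∀ a, a ≠ i → a ≠ j → ∀ D : Finset α,
      G.util wp wm r'' a D = G.util wp wm r' a D := by
    intro a hai haj D
    rw [util_eq_aux, util_eq_aux]
    congr 1
    congr 1
    refine Finset.sum_congr rfl fun b _ => ?_
    simp [hr', hr'', hai, haj]
  have hjPi : j ∈ P i := hPij ▸ hP.1 j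
  have hiPj : i ∈ P j := hPij ▸ hP.1 i
  intro a haC
  have hb := hblock a haC
  by_cases hai : a = i
  · subst hai
    rw [keyi C, keyi (P a)]
    simp only [hjPi, if_pos]
    by_cases hjC : j ∈ C
    · simp only [hjC, if_pos]; omega
    · simp only [hjC, if_neg, not_false_iff]; omega
  · by_cases haj : a = j
    · subst haj
      rw [keyj C, keyj (P a)]
      simp only [hiPj, if_pos]
      by_cases hiC : i ∈ C
      · simp only [hiC, if_pos]; omega
      · simp only [hiC, if_neg, not_false_iff]; omega
    · rw [keyo a hai haj C, keyo a hai haj (P a)]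
      exact hb
end

section
/- Let G be a FOHGS or EOHGS, let γ be a partition, and let r' be the resolution in which each stranger pair (i,j) becomes friendship if γ(i) = γ(j) and enmity otherwise. If a coalition C blocks γ under r', then C blocks γ under every resolution r of the stranger relations; i.e., C necessarily blocks γ. -/
open Finset

variable {α : Type*} [Fintype α] [DecidableEq α]

/-- Utility as a pointwise sum over the coalition. -/
lemma util_eq_sum (G : HGS α) (wp wm : ℤ) (s : α → α → Bool) (a : α) (D : Finset α) :
    G.util wp wm s a D = ∑ j ∈ D,
      ((if j ∈ G.F a then wp else 0) + (if j ∈ G.S a ∧ s a j = true then wp else 0)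
        - ((if j ∈ G.E a then wm else 0) + (if j ∈ G.S a ∧ s a j = false then wm else 0))) := by
  have h1 : ∀ (t : Finset α) (w : ℤ), (∑ j ∈ D, if j ∈ t then w else 0) = w * ((t ∩ D).card : ℤ) := by
    intro t w
    rw [Finset.inter_comm, ← Finset.filter_mem_eq_inter, Finset.card_filter]
    push_cast
    simp [Finset.mul_sum, mul_ite, mul_comm]
  have h2 : ∀ (b : Bool) (w : ℤ),
      (∑ j ∈ D, if j ∈ G.S a ∧ s a j = b then w else 0)
        = w * ((((G.S a ∩ D).filter (fun j => s a j = b)).card : ℤ)) := by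
    intro b w
    have : (G.S a ∩ D).filter (fun j => s a j = b) = D.filter (fun j => j ∈ G.S a ∧ s a j = b) := by
      ext j; simp [Finset.mem_inter, Finset.mem_filter, and_assoc, and_comm]
      tauto
    rw [this, Finset.card_filter]
    push_cast
    simp [Finset.mul_sum, mul_ite, Finset.sum_ite, mul_comm]
  simp only [HGS.util, Finset.sum_sub_distrib, Finset.sum_add_distrib, h1, h2]
  ring

/-- If `C` blocks `γ` under the resolution `r'` (strangers become friends iff they
share a coalition in `γ`), then `C` blocks `γ` under every resolution. -/
theorem blocks_under_rprime_necessarily_blocks (G : HGS α) (hG : G.IsValid) (wp wm : ℤ)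
    (hw : (wp = Fintype.card α ∧ wm = 1) ∨ (wp = 1 ∧ wm = Fintype.card α))
    (P : α → Finset α) (hP : IsPartition P) (C : Finset α)
    (hblock : Blocks G wp wm (fun a b => decide (P a = P b)) P C) :
    ∀ r : α → α → Bool, Blocks G wp wm r P C := by
  obtain ⟨hP1, hP2⟩ := hP
  have hwp : 0 ≤ wp := by rcases hw with ⟨h1, h2⟩ | ⟨h1, h2⟩ <;> simp [h1, h2]
  have hwm : 0 ≤ wm := by rcases hw with ⟨h1, h2⟩ | ⟨h1, h2⟩ <;> simp [h1, h2]
  intro r a ha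
  have hba := hblock a ha
  -- pointwise summand
  set g : (α → α → Bool) → α → ℤ := fun s j =>
      ((if j ∈ G.F a then wp else 0) + (if j ∈ G.S a ∧ s a j = true then wp else 0)
        - ((if j ∈ G.E a then wm else 0) + (if j ∈ G.S a ∧ s a j = false then wm else 0)))
    with hg
  have hdiff : ∀ s : α → α → Bool,
      G.util wp wm s a C - G.util wp wm s a (P a)
        = ∑ j ∈ C \ P a, g s j - ∑ j ∈ P a \ C, g s j := by
    intro s
    rw [util_eq_sum, util_eq_sum, ← Finset.sum_inter_add_sum_sdiff C (P a) (g s),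
      ← Finset.sum_inter_add_sum_sdiff (P a) C (g s), Finset.inter_comm (P a) C]
    ring
  set r' : α → α → Bool := fun a b => decide (P a = P b) with hr'
  have h1 : ∀ j ∈ C \ P a, g r' j ≤ g r j := by
    intro j hj
    rw [Finset.mem_sdiff] at hj
    have hne : P a ≠ P j := by
      intro h
      exact hj.2 (h ▸ hP1 j)
    by_cases hs : j ∈ G.S a <;> cases hra : r a j <;>
      simp [hg, hr', hs, hra, hne] <;> linarith
  have h2 : ∀ j ∈ P a \ C, g r j ≤ g r' j := by
    intro j hj
    rw [Finset.mem_sdiff] at hj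
    have heq : P a = P j := (hP2 a j hj.1).symm
    by_cases hs : j ∈ G.S a <;> cases hra : r a j <;>
      simp [hg, hr', hs, hra, heq] <;> linarith
  have key : G.util wp wm r' a C - G.util wp wm r' a (P a)
      ≤ G.util wp wm r a C - G.util wp wm r a (P a) := by
    rw [hdiff, hdiff]
    have := Finset.sum_le_sum h1
    have := Finset.sum_le_sum h2
    linarith
  linarith
end

section
/- Let G be a FOHGS or EOHGS, γ a partition, and r' the resolution making stranger pairs friends iff they share a coalition in γ. If γ is core stable under r' (no nonempty coalition blocks γ under r'), then γ is possibly core stable; conversely, if γ is not possibly core stable (blocked under every resolution), then there exists a single coalition C that blocks γ under all resolutions simultaneously. -/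
open Finset

variable {α : Type*} [Fintype α] [DecidableEq α]

/-- Pointwise value of agent `j` for agent `i` under resolution `r`. -/
def phiHGS (G : HGS α) (wp wm : ℤ) (r : α → α → Bool) (i j : α) : ℤ :=
  (if j ∈ G.F i then wp else 0) - (if j ∈ G.E i then wm else 0) +
    (if j ∈ G.S i then (if r i j then wp else -wm) else 0)

lemma util_eq_sum_s11 (G : HGS α) (wp wm : ℤ) (r : α → α → Bool) (i : α) (C : Finset α) :
    G.util wp wm r i C = ∑ j ∈ C, phiHGS G wp wm r i j := by
  have hF : ((G.F i ∩ C).card : ℤ) = ∑ j ∈ C, if j ∈ G.F i then (1:ℤ) else 0 := by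
    rw [Finset.inter_comm, ← Finset.filter_mem_eq_inter, Finset.card_filter]
    push_cast; rfl
  have hE : ((G.E i ∩ C).card : ℤ) = ∑ j ∈ C, if j ∈ G.E i then (1:ℤ) else 0 := by
    rw [Finset.inter_comm, ← Finset.filter_mem_eq_inter, Finset.card_filter]
    push_cast; rfl
  have hSt : (((G.S i ∩ C).filter (fun j => r i j = true)).card : ℤ) =
      ∑ j ∈ C, if j ∈ G.S i then (if r i j then (1:ℤ) else 0) else 0 := by
    rw [Finset.inter_comm, ← Finset.filter_mem_eq_inter, Finset.filter_filter,
      Finset.card_filter]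
    push_cast
    refine Finset.sum_congr rfl fun j _ => ?_
    by_cases h1 : j ∈ G.S i <;> by_cases h2 : r i j <;> simp [h1, h2]
  have hSf : (((G.S i ∩ C).filter (fun j => r i j = false)).card : ℤ) =
      ∑ j ∈ C, if j ∈ G.S i then (if r i j then (0:ℤ) else 1) else 0 := by
    rw [Finset.inter_comm, ← Finset.filter_mem_eq_inter, Finset.filter_filter,
      Finset.card_filter]
    push_cast
    refine Finset.sum_congr rfl fun j _ => ?_
    by_cases h1 : j ∈ G.S i <;> by_cases h2 : r i j <;> simp [h1, h2]
  rw [HGS.util, hF, hE, hSt, hSf, ← Finset.sum_add_distrib, ← Finset.sum_add_distrib,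
    Finset.mul_sum, Finset.mul_sum, ← Finset.sum_sub_distrib]
  refine Finset.sum_congr rfl fun j _ => ?_
  unfold phiHGS
  by_cases h1 : j ∈ G.F i <;> by_cases h2 : j ∈ G.E i <;> by_cases h3 : j ∈ G.S i <;>
    by_cases h4 : r i j <;> simp [h1, h2, h3, h4] <;> ring

lemma blocks_all (G : HGS α) (wp wm : ℤ) (hwpm : 0 ≤ wp + wm)
    (P : α → Finset α) (hP : IsPartition P) (C : Finset α)
    (hB : Blocks G wp wm (fun a b => decide (P a = P b)) P C) (r : α → α → Bool) :
    Blocks G wp wm r P C := by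
  intro a ha
  have h := hB a ha
  rw [util_eq_sum_s11, util_eq_sum_s11] at h ⊢
  set r' : α → α → Bool := fun a b => decide (P a = P b) with hr'
  have split : ∀ (f : α → ℤ),
      ∑ j ∈ C, f j - ∑ j ∈ P a, f j = ∑ j ∈ C \ P a, f j - ∑ j ∈ P a \ C, f j := by
    intro f
    rw [← Finset.sum_inter_add_sum_sdiff C (P a) f, ← Finset.sum_inter_add_sum_sdiff (P a) C f,
      Finset.inter_comm (P a) C]
    ring
  have key : ∑ j ∈ C, phiHGS G wp wm r' a j - ∑ j ∈ P a, phiHGS G wp wm r' a j ≤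
      ∑ j ∈ C, phiHGS G wp wm r a j - ∑ j ∈ P a, phiHGS G wp wm r a j := by
    rw [split, split]
    have h1 : ∑ j ∈ C \ P a, phiHGS G wp wm r' a j ≤ ∑ j ∈ C \ P a, phiHGS G wp wm r a j := by
      refine Finset.sum_le_sum fun j hj => ?_
      have hjn : P a ≠ P j := by
        intro hEq
        exact (Finset.mem_sdiff.mp hj).2 (hEq ▸ hP.1 j)
      unfold phiHGS
      have : r' a j = false := by simp [hr', hjn]
      rw [this]
      by_cases h3 : j ∈ G.S a <;> by_cases h4 : r a j <;> simp [h3, h4] <;> linarith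
    have h2 : ∑ j ∈ P a \ C, phiHGS G wp wm r a j ≤ ∑ j ∈ P a \ C, phiHGS G wp wm r' a j := by
      refine Finset.sum_le_sum fun j hj => ?_
      have hje : P a = P j := (hP.2 a j (Finset.mem_sdiff.mp hj).1).symm
      unfold phiHGS
      have : r' a j = true := by simp [hr', hje]
      rw [this]
      by_cases h3 : j ∈ G.S a <;> by_cases h4 : r a j <;> simp [h3, h4] <;> linarith
    linarith
  linarith

/-- If `γ` is core stable under `r'` then `γ` is possibly core stable; and if `γ`
is not possibly core stable, a single coalition blocks `γ` under all resolutions. -/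
theorem possibly_core_stable_characterization (G : HGS α) (hG : G.IsValid) (wp wm : ℤ)
    (hw : (wp = Fintype.card α ∧ wm = 1) ∨ (wp = 1 ∧ wm = Fintype.card α))
    (P : α → Finset α) (hP : IsPartition P) :
    (CoreStable G wp wm (fun a b => decide (P a = P b)) P →
      ∃ r : α → α → Bool, CoreStable G wp wm r P) ∧
    ((¬ ∃ r : α → α → Bool, CoreStable G wp wm r P) →
      ∃ C : Finset α, C.Nonempty ∧ ∀ r : α → α → Bool, Blocks G wp wm r P C) := by
  have hwpm : 0 ≤ wp + wm := by
    rcases hw with ⟨rfl, rfl⟩ | ⟨rfl, rfl⟩ <;> positivity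
  constructor
  · intro h
    exact ⟨_, h⟩
  · intro h
    have h2 : ¬ CoreStable G wp wm (fun a b => decide (P a = P b)) P := fun hc => h ⟨_, hc⟩
    rw [CoreStable, not_not] at h2
    obtain ⟨C, hCne, hCb⟩ := h2
    exact ⟨C, hCne, fun r => blocks_all G wp wm hwpm P hP C hCb r⟩
end

section
/- Let G be a FOHGS or EOHGS, γ a partition, and define the resolution r* where each stranger pair (i,j) becomes enmity if γ(i) = γ(j) and friendship otherwise. Then γ is necessarily Nash stable if and only if γ is Nash stable under r*. Equivalently: there exists no agent i and coalition C ∈ γ ∪ {∅} with C ≠ γ(i) such that u_i^{r⁺}(C ∪ {i}) > u_i^{r⁻}(γ(i)) if and only if γ is Nash stable for all resolutions. -/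
open Finset

variable {α : Type*} [Fintype α] [DecidableEq α]

lemma util_rewrite (G : HGS α) (wp wm : ℤ) (r : α → α → Bool) (i : α) (C : Finset α) :
    G.util wp wm r i C =
      wp * ((G.F i ∩ C).card : ℤ) - wm * ((G.E i ∩ C).card : ℤ)
        + (wp + wm) * (((G.S i ∩ C).filter (fun j => r i j = true)).card : ℤ)
        - wm * ((G.S i ∩ C).card : ℤ) := by
  have h := Finset.card_filter_add_card_filter_not
    (s := G.S i ∩ C) (p := fun j => r i j = true)
  have h2 : ((G.S i ∩ C).filter (fun j => ¬ r i j = true))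
      = (G.S i ∩ C).filter (fun j => r i j = false) := by
    apply Finset.filter_congr; intro j _; simp
  rw [h2] at h
  unfold HGS.util
  have h3 : (((G.S i ∩ C).filter (fun j => r i j = false)).card : ℤ)
      = ((G.S i ∩ C).card : ℤ)
        - (((G.S i ∩ C).filter (fun j => r i j = true)).card : ℤ) := by
    omega
  rw [h3]; ring

lemma util_mono (G : HGS α) (wp wm : ℤ) (hw : 0 ≤ wp + wm) (r r' : α → α → Bool)
    (i : α) (C : Finset α) (h : ∀ j ∈ G.S i ∩ C, r i j = true → r' i j = true) :
    G.util wp wm r i C ≤ G.util wp wm r' i C := by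
  rw [util_rewrite, util_rewrite]
  have hsub : (G.S i ∩ C).filter (fun j => r i j = true)
      ⊆ (G.S i ∩ C).filter (fun j => r' i j = true) := by
    intro j hj
    simp only [Finset.mem_filter] at hj ⊢
    exact ⟨hj.1, h j hj.1 hj.2⟩
  have hcard := Finset.card_le_card hsub
  have hcard' : ((Finset.filter (fun j => r i j = true) (G.S i ∩ C)).card : ℤ)
      ≤ ((Finset.filter (fun j => r' i j = true) (G.S i ∩ C)).card : ℤ) := by
    exact_mod_cast hcard
  have := mul_le_mul_of_nonneg_left hcard' hw
  linarith

/-- `γ` is necessarily Nash stable iff it is Nash stable under the resolution `r*`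
making within-coalition strangers enemies and cross-coalition strangers friends. -/
theorem necessarily_nash_iff_rstar (G : HGS α) (hG : G.IsValid) (wp wm : ℤ)
    (hw : (wp = Fintype.card α ∧ wm = 1) ∨ (wp = 1 ∧ wm = Fintype.card α))
    (P : α → Finset α) (hP : IsPartition P) :
    (∀ r : α → α → Bool, NashStable G wp wm r P) ↔
      NashStable G wp wm (fun a b => decide (P a ≠ P b)) P := by
  constructor
  · intro h; exact h _
  · intro hstar r
    have hwpos : 0 ≤ wp + wm := by
      have hc : (0 : ℤ) ≤ (Fintype.card α : ℤ) := by positivity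
      rcases hw with ⟨h1, h2⟩ | ⟨h1, h2⟩ <;> subst h1 <;> subst h2 <;> linarith
    rintro ⟨i, C, hC, hiC, hgt⟩
    apply hstar
    refine ⟨i, C, hC, hiC, ?_⟩
    have h1 : G.util wp wm r i (insert i C)
        ≤ G.util wp wm (fun a b => decide (P a ≠ P b)) i (insert i C) := by
      apply util_mono _ _ _ hwpos
      intro j hj _
      simp only [Finset.mem_inter, Finset.mem_insert] at hj
      have hji : j ≠ i := ((hG i j).1).mp (Or.inr (Or.inr hj.1))
      have hjC : j ∈ C := hj.2.resolve_left hji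
      rcases hC with rfl | ⟨k, rfl⟩
      · exact absurd hjC (Finset.notMem_empty j)
      · have hPj : P j = P k := hP.2 k j hjC
        have : P i ≠ P k := fun h => hiC (h ▸ hP.1 i)
        simp [hPj, this]
    have h2 : G.util wp wm (fun a b => decide (P a ≠ P b)) i (P i)
        ≤ G.util wp wm r i (P i) := by
      apply util_mono _ _ _ hwpos
      intro j hj hjt
      simp only [Finset.mem_inter] at hj
      have hPj : P j = P i := hP.2 i j hj.2
      simp [hPj] at hjt
    linarith
end

section
/- Let G be a FOHGS or EOHGS, γ a partition, and define the resolution r' where each stranger pair (i,j) becomes friendship if γ(i) = γ(j) and enmity otherwise. Then γ is possibly Nash stable if and only if γ is Nash stable under r'. -/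
open Finset

variable {α : Type*} [Fintype α] [DecidableEq α]

/-- `γ` is possibly Nash stable iff it is Nash stable under the resolution `r'`
making within-coalition strangers friends and cross-coalition strangers enemies. -/
theorem possibly_nash_iff_rprime (G : HGS α) (hG : G.IsValid) (wp wm : ℤ)
    (hw : (wp = Fintype.card α ∧ wm = 1) ∨ (wp = 1 ∧ wm = Fintype.card α))
    (P : α → Finset α) (hP : IsPartition P) :
    (∃ r : α → α → Bool, NashStable G wp wm r P) ↔
      NashStable G wp wm (fun a b => decide (P a = P b)) P := by
  have hwp : 0 ≤ wp := by rcases hw with ⟨h1, _⟩ | ⟨h1, _⟩ <;> simp [h1]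
  have hwm : 0 ≤ wm := by rcases hw with ⟨_, h1⟩ | ⟨_, h1⟩ <;> simp [h1]
  constructor
  · rintro ⟨r, hr⟩ ⟨i, C, hC, hiC, hgt⟩
    apply hr
    refine ⟨i, C, hC, hiC, ?_⟩
    -- utility of P i under r' is the max over resolutions
    have hmaxP : G.util wp wm r i (P i) ≤
        G.util wp wm (fun a b => decide (P a = P b)) i (P i) := by
      have hft : ((G.S i ∩ P i).filter (fun j => decide (P i = P j) = true))
          = G.S i ∩ P i := by
        apply Finset.filter_eq_self.2
        intro j hj
        have hjP : j ∈ P i := (Finset.mem_inter.1 hj).2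
        simp [hP.2 i j hjP]
      have hff : ((G.S i ∩ P i).filter (fun j => decide (P i = P j) = false))
          = (∅ : Finset α) := by
        apply Finset.filter_eq_empty_iff.2
        intro j hj
        have hjP : j ∈ P i := (Finset.mem_inter.1 hj).2
        simp [hP.2 i j hjP]
      have h1 : (((G.S i ∩ P i).filter (fun j => r i j = true)).card : ℤ)
          ≤ ((G.S i ∩ P i).card : ℤ) := by
        exact_mod_cast Finset.card_filter_le _ _
      have h2 : (0 : ℤ) ≤ (((G.S i ∩ P i).filter (fun j => r i j = false)).card : ℤ) :=
        Int.natCast_nonneg _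
      unfold HGS.util
      rw [hft, hff]
      simp only [Finset.card_empty, Nat.cast_zero, add_zero]
      nlinarith [mul_nonneg hwp (sub_nonneg.2 h1), mul_nonneg hwm h2]
    -- utility of insert i C under r' is the min over resolutions
    have hminC : G.util wp wm (fun a b => decide (P a = P b)) i (insert i C) ≤
        G.util wp wm r i (insert i C) := by
      have hkey : ∀ j ∈ G.S i ∩ insert i C, ¬ (P i = P j) := by
        intro j hj
        have hjS : j ∈ G.S i := (Finset.mem_inter.1 hj).1
        have hji : j ≠ i := (hG i j).1.mp (Or.inr (Or.inr hjS))
        have hjC : j ∈ C := by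
          rcases Finset.mem_insert.1 (Finset.mem_inter.1 hj).2 with h | h
          · exact absurd h hji
          · exact h
        rcases hC with rfl | ⟨k, rfl⟩
        · exact absurd hjC (Finset.notMem_empty j)
        · have hPj : P j = P k := hP.2 k j hjC
          intro hPij
          apply hiC
          rw [← hPj, ← hPij]
          exact hP.1 i
      have hft : ((G.S i ∩ insert i C).filter (fun j => decide (P i = P j) = true))
          = (∅ : Finset α) := by
        apply Finset.filter_eq_empty_iff.2
        intro j hj
        simp [hkey j hj]
      have hff : ((G.S i ∩ insert i C).filter (fun j => decide (P i = P j) = false))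
          = G.S i ∩ insert i C := by
        apply Finset.filter_eq_self.2
        intro j hj
        simp [hkey j hj]
      have h1 : (((G.S i ∩ insert i C).filter (fun j => r i j = false)).card : ℤ)
          ≤ ((G.S i ∩ insert i C).card : ℤ) := by
        exact_mod_cast Finset.card_filter_le _ _
      have h2 : (0 : ℤ) ≤
          (((G.S i ∩ insert i C).filter (fun j => r i j = true)).card : ℤ) :=
        Int.natCast_nonneg _
      unfold HGS.util
      rw [hft, hff]
      simp only [Finset.card_empty, Nat.cast_zero, add_zero]
      nlinarith [mul_nonneg hwp h2, mul_nonneg hwm (sub_nonneg.2 h1)]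
    linarith
  · intro h
    exact ⟨_, h⟩
end

section
/- Consider the symmetric EOHGS with three agents {1,2,3}, friendship edges (1,2) and (1,3), and stranger edge (2,3). No partition of {1,2,3} is necessarily Nash stable. -/
open Finset

variable {α : Type*} [Fintype α] [DecidableEq α]

/-- In the three-agent EOHGS above, no partition is necessarily Nash stable. -/
theorem three_game_no_necessarily_NS (P : Fin 3 → Finset (Fin 3)) (hP : IsPartition P) :
    ¬ ∀ r : Fin 3 → Fin 3 → Bool, NashStable threeGame 1 3 r P := by
  intro h
  obtain ⟨hmem, heq⟩ := hP
  by_cases h01 : (1:Fin 3) ∈ P 0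
  · have e1 : P 1 = P 0 := heq 0 1 h01
    by_cases h02 : (2:Fin 3) ∈ P 0
    · -- grand coalition
      have e0 : P 0 = {0,1,2} := by
        ext a; fin_cases a <;> simp [hmem 0, h01, h02]
      exact h (fun _ _ => false) ⟨1, ∅, Or.inl rfl, by simp, by
        rw [e1, e0]; decide⟩
    · -- {0,1},{2}
      have e0 : P 0 = {0,1} := by
        ext a; fin_cases a <;> simp [hmem 0, h01, h02]
      have h2n : (2:Fin 3) ∉ P 0 := h02
      have hni : (2:Fin 3) ∉ ({0,1} : Finset (Fin 3)) := by decide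
      exact h (fun _ _ => true) ⟨2, P 0, Or.inr ⟨0, rfl⟩, e0 ▸ hni, by
        have h0n2 : (0:Fin 3) ∉ P 2 := fun hc =>
          h02 ((heq 2 0 hc) ▸ hmem 2)
        have h1n2 : (1:Fin 3) ∉ P 2 := fun hc =>
          h02 (e1 ▸ (heq 2 1 hc) ▸ hmem 2)
        have e2 : P 2 = {2} := by
          ext a; fin_cases a <;> simp [hmem 2, h0n2, h1n2]
        rw [e0, e2]; decide⟩
  · by_cases h02 : (2:Fin 3) ∈ P 0
    · -- {0,2},{1}
      have e0 : P 0 = {0,2} := by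
        ext a; fin_cases a <;> simp [hmem 0, h01, h02]
      have hni : (1:Fin 3) ∉ ({0,2} : Finset (Fin 3)) := by decide
      exact h (fun _ _ => true) ⟨1, P 0, Or.inr ⟨0, rfl⟩, e0 ▸ hni, by
        have h0n1 : (0:Fin 3) ∉ P 1 := fun hc =>
          h01 ((heq 1 0 hc) ▸ hmem 1)
        have h2n1 : (2:Fin 3) ∉ P 1 := fun hc =>
          h01 (((heq 0 2 h02).symm.trans (heq 1 2 hc)) ▸ hmem 1)
        have e1 : P 1 = {1} := by
          ext a; fin_cases a <;> simp [hmem 1, h0n1, h2n1]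
        rw [e0, e1]; decide⟩
    · have e0 : P 0 = {0} := by
        ext a; fin_cases a <;> simp [hmem 0, h01, h02]
      by_cases h12 : (2:Fin 3) ∈ P 1
      · -- {0},{1,2}
        have h0n1 : (0:Fin 3) ∉ P 1 := fun hc =>
          h01 ((heq 1 0 hc) ▸ hmem 1)
        have e1 : P 1 = {1,2} := by
          ext a; fin_cases a <;> simp [hmem 1, h12, h0n1]
        exact h (fun _ _ => false) ⟨1, ∅, Or.inl rfl, by simp, by
          rw [e1]; decide⟩
      · -- all singletons
        have h0n1 : (0:Fin 3) ∉ P 1 := fun hc =>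
          h01 ((heq 1 0 hc) ▸ hmem 1)
        have e1 : P 1 = {1} := by
          ext a; fin_cases a <;> simp [hmem 1, h12, h0n1]
        have hni : (1:Fin 3) ∉ ({0} : Finset (Fin 3)) := by decide
        exact h (fun _ _ => true) ⟨1, P 0, Or.inr ⟨0, rfl⟩, e0 ▸ hni, by
          rw [e0, e1]; decide⟩
end

section
/- Consider the symmetric FOHGS or EOHGS where all pairs of agents are mutual strangers and |N| ≥ 2. Then no partition is necessarily contractually individually stable: for every partition γ there exists a resolution of the stranger relations under which some agent has a strictly improving deviation that is permitted by both the destination coalition and the departed coalition. -/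
open Finset

variable {α : Type*} [Fintype α] [DecidableEq α]

lemma util_const_aux (G : HGS α) (hF : ∀ i : α, G.F i = ∅) (hE : ∀ i : α, G.E i = ∅)
    (hS : ∀ i : α, G.S i = Finset.univ \ {i}) (wp wm : ℤ) (b : Bool) (i : α) (C : Finset α) :
    G.util wp wm (fun _ _ => b) i C =
      if b then wp * ((C \ {i}).card : ℤ) else -(wm * ((C \ {i}).card : ℤ)) := by
  have hSC : G.S i ∩ C = C \ {i} := by
    rw [hS]; ext x; simp [and_comm]
  unfold HGS.util
  rw [hF, hE, hSC]
  cases b <;> simp [Finset.filter_true_of_mem, Finset.filter_false_of_mem]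

/-- In the all-strangers FOHGS/EOHGS with at least two agents, no partition is
necessarily contractually individually stable. -/
theorem all_strangers_no_necessarily_CIS (h2 : 2 ≤ Fintype.card α)
    (G : HGS α) (hF : ∀ i : α, G.F i = ∅) (hE : ∀ i : α, G.E i = ∅)
    (hS : ∀ i : α, G.S i = Finset.univ \ {i}) (wp wm : ℤ)
    (hw : (wp = Fintype.card α ∧ wm = 1) ∨ (wp = 1 ∧ wm = Fintype.card α)) :
    ∀ P : α → Finset α, IsPartition P → ¬ ∀ r : α → α → Bool, CIS G wp wm r P := by
  intro P hP hall
  have hwp : 0 < wp := by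
    rcases hw with ⟨h1,_⟩|⟨h1,_⟩ <;> rw [h1] <;> [exact_mod_cast Nat.lt_of_lt_of_le (by norm_num) h2; norm_num]
  have hwm : 0 < wm := by
    rcases hw with ⟨_,h1⟩|⟨_,h1⟩ <;> rw [h1] <;> [norm_num; exact_mod_cast Nat.lt_of_lt_of_le (by norm_num) h2]
  by_cases hsing : ∀ i : α, P i = {i}
  · obtain ⟨a, b, hab⟩ := Fintype.exists_pair_of_one_lt_card (by omega : 1 < Fintype.card α)
    apply hall (fun _ _ => true)
    refine ⟨a, P b, Or.inr ⟨b, rfl⟩, ?_, ?_, ?_, ?_⟩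
    · rw [hsing b]; simp [hab]
    · rw [util_const_aux G hF hE hS, util_const_aux G hF hE hS, hsing a, hsing b]
      have h1 : (insert a {b} : Finset α) \ {a} = {b} := by
        ext x; simp; aesop
      simp [h1]
      nlinarith
    · intro j hj
      rw [hsing b] at hj
      simp at hj; subst hj
      rw [util_const_aux G hF hE hS, util_const_aux G hF hE hS, hsing j]
      have h1 : (insert a {j} : Finset α) \ {j} = {a} := by
        ext x; simp; aesop
      simp [h1]
      positivity
    · intro k hk hka
      rw [hsing a] at hk; simp at hk; exact absurd hk hka
  · push_neg at hsing
    obtain ⟨i, hi⟩ := hsing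
    have hmi : i ∈ P i := hP.1 i
    obtain ⟨j, hj, hji⟩ : ∃ j ∈ P i, j ≠ i := by
      by_contra h
      push_neg at h
      exact hi (Finset.eq_singleton_iff_unique_mem.mpr ⟨hmi, h⟩)
    apply hall (fun _ _ => false)
    refine ⟨i, ∅, Or.inl rfl, by simp, ?_, by simp, ?_⟩
    · rw [util_const_aux G hF hE hS, util_const_aux G hF hE hS]
      have h1 : (insert i (∅:Finset α)) \ {i} = ∅ := by simp
      have h2 : 0 < ((P i \ {i}).card : ℤ) := by
        have : j ∈ P i \ {i} := Finset.mem_sdiff.mpr ⟨hj, by simp [hji]⟩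
        exact_mod_cast Finset.card_pos.mpr ⟨j, this⟩
      simp [h1]
      nlinarith
    · intro k hk hki
      rw [util_const_aux G hF hE hS, util_const_aux G hF hE hS]
      simp only [if_neg (by simp : ¬ (false = true))]
      have hsub : (P i \ {i}) \ {k} ⊆ P i \ {k} :=
        Finset.sdiff_subset_sdiff Finset.sdiff_subset le_rfl
      have hc : (((P i \ {i}) \ {k}).card : ℤ) ≤ ((P i \ {k}).card : ℤ) := by
        exact_mod_cast Finset.card_le_card hsub
      nlinarith
end
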